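/- Let A(t) be a positive definite solution of dA/dt = A⁻¹C + CA⁻¹ − 2A. Then ℓ(A(t)) ≤ ℓ(A(0))·exp(−2t) for all t ≥ 0, and hence for any 0 < ε < ℓ(A(0)), the first time at which ℓ(A(t)) ≤ ε is at most (1/2)·log(ℓ(A(0))/ε). -/

import Mathlib

/-!
Along the flow the residual `E = C - A²` satisfies `E' = -(A⁻¹EA + AEA⁻¹ + 2E)`, so
`(‖E‖²_F)' = -2 tr(A⁻¹·EAE) - 2 tr(A·EA⁻¹E) - 4‖E‖²_F`. Both traces are traces of products of
two positive semidefinite matrices, hence nonnegative, and Grönwall gives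
`‖E(t)‖²_F ≤ e^{-4t} ‖E(0)‖²_F`. The hitting-time bound follows because `t = ½ log(ℓ(A 0)/ε)`
already satisfies `ℓ(A t) ≤ ε`.
-/

open Matrix

open scoped MatrixOrder ComplexOrder in
theorem Matrix.PosSemidef.trace_mul_nonneg {𝕜 n : Type*} [RCLike 𝕜] [Fintype n]
    {P Q : Matrix n n 𝕜} (hP : P.PosSemidef) (hQ : Q.PosSemidef) : 0 ≤ (P * Q).trace := by
  classical
  obtain ⟨B, rfl⟩ := CStarAlgebra.nonneg_iff_eq_star_mul_self.mp hQ.nonneg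
  rw [← Matrix.mul_assoc, trace_mul_cycle]
  exact (hP.mul_mul_conjTranspose_same B).trace_nonneg

section EntrywiseDerivatives

variable {𝕜 : Type*} [NontriviallyNormedField 𝕜] {l m n : Type*} [Fintype m] {t : 𝕜}

theorem hasDerivAt_matrix_mul_apply {A : 𝕜 → Matrix l m 𝕜} {B : 𝕜 → Matrix m n 𝕜}
    {A' : Matrix l m 𝕜} {B' : Matrix m n 𝕜}
    (hA : ∀ i j, HasDerivAt (fun s => A s i j) (A' i j) t)
    (hB : ∀ i j, HasDerivAt (fun s => B s i j) (B' i j) t) (i : l) (j : n) :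
    HasDerivAt (fun s => (A s * B s) i j) ((A' * B t + A t * B') i j) t := by
  simp only [mul_apply, Matrix.add_apply, ← Finset.sum_add_distrib]
  exact HasDerivAt.fun_sum fun k _ => (hA i k).mul (hB k j)

theorem hasDerivAt_sum_sum_sq_apply [Fintype n] {M : 𝕜 → Matrix m n 𝕜} {M' : Matrix m n 𝕜}
    (hM : ∀ i j, HasDerivAt (fun s => M s i j) (M' i j) t) :
    HasDerivAt (fun s => ∑ i, ∑ j, M s i j ^ 2) (2 * (M' * (M t)ᵀ).trace) t := by
  rw [← sum_hadamard_eq, Finset.mul_sum]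
  refine HasDerivAt.fun_sum fun i _ => ?_
  rw [Finset.mul_sum]
  refine HasDerivAt.fun_sum fun j _ => ?_
  refine ((hM i j).fun_pow 2).congr_deriv ?_
  rw [hadamard_apply]
  ring

end EntrywiseDerivatives

theorem le_mul_exp_of_hasDerivAt_le_mul {f f' : ℝ → ℝ} {K : ℝ}
    (hf : ∀ t, HasDerivAt f (f' t) t) (hbound : ∀ t, f' t ≤ K * f t) {t : ℝ} (ht : 0 ≤ t) :
    f t ≤ f 0 * Real.exp (K * t) := by
  have := le_gronwallBound_of_liminf_deriv_right_le (a := 0) (b := t) (ε := 0)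
    (fun x _ => (hf x).continuousAt.continuousWithinAt)
    (fun x _ _ hr => (hf x).hasDerivWithinAt.liminf_right_slope_le hr) le_rfl
    (fun x _ => by simpa using hbound x) t ⟨ht, le_rfl⟩
  simpa [gronwallBound_ε0] using this

theorem sInf_le_one_div_mul_log_of_le_mul_exp {f : ℝ → ℝ} {c ε : ℝ} (hc : 0 < c)
    (hf : ∀ t, 0 ≤ t → f t ≤ f 0 * Real.exp (-c * t)) (hε : 0 < ε) (hεf : ε < f 0) :
    sInf {t | 0 ≤ t ∧ f t ≤ ε} ≤ 1 / c * Real.log (f 0 / ε) := by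
  have hf0 : 0 < f 0 := hε.trans hεf
  have hT : 0 ≤ 1 / c * Real.log (f 0 / ε) :=
    mul_nonneg (by positivity) (Real.log_nonneg ((one_le_div hε).mpr hεf.le))
  refine csInf_le ⟨0, fun _ ht => ht.1⟩ ⟨hT, ?_⟩
  calc f _ ≤ f 0 * Real.exp (-c * (1 / c * Real.log (f 0 / ε))) := hf _ hT
    _ = ε := by
      rw [show -c * (1 / c * Real.log (f 0 / ε)) = -Real.log (f 0 / ε) by field_simp,
        Real.exp_neg, Real.exp_log (by positivity)]
      field_simp

theorem flow_mul_add_mul_flow {R ι : Type*} [CommRing R] [Fintype ι] [DecidableEq ι]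
    {A C : Matrix ι ι R} (hA : IsUnit A.det) :
    (A⁻¹ * C + C * A⁻¹ - (2 : R) • A) * A + A * (A⁻¹ * C + C * A⁻¹ - (2 : R) • A) =
      A⁻¹ * (C - A * A) * A + A * (C - A * A) * A⁻¹ + (2 : R) • (C - A * A) := by
  simp only [Matrix.mul_sub, Matrix.sub_mul, Matrix.mul_add, Matrix.add_mul, Matrix.smul_mul,
    Matrix.mul_smul, Matrix.mul_assoc, nonsing_inv_mul_cancel_left _ _ hA,
    mul_nonsing_inv_cancel_left _ _ hA, nonsing_inv_mul _ hA, mul_nonsing_inv _ hA,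
    Matrix.mul_one]
  module

section ResidualFlow

variable {ι : Type*} [Fintype ι] [DecidableEq ι]

theorem trace_residual_deriv_mul_le {A E : Matrix ι ι ℝ} (hA : A.PosDef) (hE : E.IsHermitian) :
    (-(A⁻¹ * E * A + A * E * A⁻¹ + (2 : ℝ) • E) * E).trace ≤ -2 * (E * E).trace := by
  have h₁ : 0 ≤ (A⁻¹ * (E * A * E)).trace := by
    refine hA.inv.posSemidef.trace_mul_nonneg ?_
    simpa only [hE.eq] using hA.posSemidef.conjTranspose_mul_mul_same E
  have h₂ : 0 ≤ (A * (E * A⁻¹ * E)).trace := by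
    refine hA.posSemidef.trace_mul_nonneg ?_
    simpa only [hE.eq] using hA.inv.posSemidef.conjTranspose_mul_mul_same E
  simp only [Matrix.neg_mul, Matrix.add_mul, Matrix.smul_mul, trace_neg, trace_add, trace_smul,
    Matrix.mul_assoc] at h₁ h₂ ⊢
  simp only [smul_eq_mul]
  linarith

variable {C : Matrix ι ι ℝ} {A : ℝ → Matrix ι ι ℝ}

theorem hasDerivAt_residual_apply (hA : ∀ t, (A t).PosDef)
    (hAode : ∀ t i j,
      HasDerivAt (fun s => A s i j) (((A t)⁻¹ * C + C * (A t)⁻¹ - (2 : ℝ) • A t) i j) t)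
    (t : ℝ) (i j : ι) :
    HasDerivAt (fun s => (C - A s * A s) i j)
      ((-((A t)⁻¹ * (C - A t * A t) * A t + A t * (C - A t * A t) * (A t)⁻¹ +
        (2 : ℝ) • (C - A t * A t))) i j) t := by
  rw [← flow_mul_add_mul_flow (hA t).det_pos.ne'.isUnit]
  exact (hasDerivAt_matrix_mul_apply (hAode t) (hAode t) i j).const_sub (C i j)

theorem sum_sum_residual_sq_le_mul_exp (hC : C.IsHermitian) (hA : ∀ t, (A t).PosDef)
    (hAode : ∀ t i j,
      HasDerivAt (fun s => A s i j) (((A t)⁻¹ * C + C * (A t)⁻¹ - (2 : ℝ) • A t) i j) t)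
    {t : ℝ} (ht : 0 ≤ t) :
    ∑ i, ∑ j, (C - A t * A t) i j ^ 2 ≤
      (∑ i, ∑ j, (C - A 0 * A 0) i j ^ 2) * Real.exp (-4 * t) := by
  refine le_mul_exp_of_hasDerivAt_le_mul
    (fun t => hasDerivAt_sum_sum_sq_apply (hasDerivAt_residual_apply hA hAode t)) (fun s => ?_) ht
  have hE : (C - A s * A s).IsHermitian := hC.sub (by simpa [sq] using (hA s).isHermitian.pow 2)
  have hsq : ∑ i, ∑ j, (C - A s * A s) i j ^ 2 = ((C - A s * A s) * (C - A s * A s)ᵀ).trace := by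
    simp only [← sum_hadamard_eq, hadamard_apply, sq]
  rw [hsq, (isHermitian_iff_isSymm.mp hE).eq]
  linarith [trace_residual_deriv_mul_le (hA s) hE]

end ResidualFlow

/-- If A(t) is positive definite solving dA/dt = A⁻¹C + CA⁻¹ − 2A, then
ℓ(A(t)) ≤ ℓ(A(0))·exp(−2t) for all t ≥ 0, and for 0 < ε < ℓ(A(0)) the first time at
which ℓ(A(t)) ≤ ε is at most (1/2)·log(ℓ(A(0))/ε). -/
theorem stmt_13 {n : ℕ} (C : Matrix (Fin n) (Fin n) ℝ) (hC : C.PosDef)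
    (A : ℝ → Matrix (Fin n) (Fin n) ℝ) (hA : ∀ t : ℝ, (A t).PosDef)
    (hAode : ∀ t : ℝ, ∀ i j,
      HasDerivAt (fun s => A s i j)
        (((A t)⁻¹ * C + C * (A t)⁻¹ - (2 : ℝ) • A t) i j) t) :
    let ℓ : Matrix (Fin n) (Fin n) ℝ → ℝ :=
      fun B => Real.sqrt (∑ i, ∑ j, ((C - B * B) i j) ^ 2)
    (∀ t : ℝ, 0 ≤ t → ℓ (A t) ≤ ℓ (A 0) * Real.exp (-2 * t)) ∧
    (∀ ε : ℝ, 0 < ε → ε < ℓ (A 0) →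
      sInf {t : ℝ | 0 ≤ t ∧ ℓ (A t) ≤ ε} ≤ (1 / 2) * Real.log (ℓ (A 0) / ε)) := by
  intro ℓ
  have decay : ∀ t : ℝ, 0 ≤ t → ℓ (A t) ≤ ℓ (A 0) * Real.exp (-2 * t) := fun t ht =>
    calc ℓ (A t)
        ≤ √((∑ i, ∑ j, (C - A 0 * A 0) i j ^ 2) * Real.exp (-4 * t)) :=
          Real.sqrt_le_sqrt (sum_sum_residual_sq_le_mul_exp hC.isHermitian hA hAode ht)
      _ = ℓ (A 0) * Real.exp (-2 * t) := by
          rw [show Real.exp (-4 * t) = Real.exp (-2 * t) ^ 2 by rw [← Real.exp_nat_mul]; ring_nf,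
            Real.sqrt_mul' _ (sq_nonneg _), Real.sqrt_sq (Real.exp_nonneg _)]
  exact ⟨decay, fun ε hε hεℓ =>
    sInf_le_one_div_mul_log_of_le_mul_exp (f := fun t => ℓ (A t)) two_pos decay hε hεℓ⟩
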